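/- With P_n, Q_n as in the recurrence q^{2n+ν+1}y_{n+1} - q^{2n}(1+q^{2ν})y_n + q^{2n+ν-1}y_{n-1} = λ y_n, initial conditions (P_{-1},P_0)=(0,1), (Q_{-1},Q_0)=(-1,0), one has for all n ≥ 0 and λ ∈ ℂ: j_ν(q^{-n}λ; q²) = q^{n(ν+1)}[j_ν(λ;q²)P_n(-λ²) - q^{ν+1}j_ν(qλ;q²)Q_n(-λ²)]. -/

import Mathlib

open scoped BigOperators

noncomputable def qPochC (q a : ℂ) (n : ℕ) : ℂ := ∏ i ∈ Finset.range n, (1 - a * q ^ i)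

noncomputable def jC (q ν : ℝ) (x : ℂ) : ℂ :=
  ∑' n : ℕ, (-1) ^ n * (q : ℂ) ^ (n * (n + 1)) * x ^ (2 * n) /
    (qPochC ((q : ℂ) ^ 2) ((q : ℂ) ^ 2) n *
      qPochC ((q : ℂ) ^ 2) (((q ^ (2 * ν + 2) : ℝ) : ℂ)) n)

/-!
Comparing consecutive coefficients of the series gives the `q`-difference equation
`j(x/q) = (1 + q^{2ν}) j(x) - q^{2ν} j(qx) - x² j(x)`, so `n ↦ j_ν(q^{-n}λ)` obeys a three-term
recurrence in `n`. Rescaling by `q^{n(ν+1)}` turns the recurrence of `P_n(-λ²)` and `Q_n(-λ²)` into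
the same one; both sides of the identity are therefore solutions, and they agree for `n = 0, 1`.
-/

open Filter Topology

theorem summable_of_ratio_tendsto_zero {R : Type*} [NormedRing R] [CompleteSpace R]
    {f r : ℕ → R} (hf : ∀ n, f (n + 1) = r n * f n) (hr : Tendsto r atTop (𝓝 0)) :
    Summable f := by
  refine summable_of_ratio_norm_eventually_le (r := 1 / 2) (by norm_num) ?_
  filter_upwards [(tendsto_norm_zero.comp hr).eventually_le_const (by norm_num : (0 : ℝ) < 1 / 2)]
    with n hn
  rw [hf]
  exact (norm_mul_le _ _).trans (by gcongr; exact hn)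

section ThreeTermRec

variable {R : Type*} [CommRing R] {α β : ℕ → R} {f g : ℕ → R}

def SolvesThreeTermRec (α β : ℕ → R) (y : ℕ → R) : Prop :=
  ∀ n, y (n + 2) = α n * y (n + 1) + β n * y n

theorem SolvesThreeTermRec.linearCombination (hf : SolvesThreeTermRec α β f)
    (hg : SolvesThreeTermRec α β g) (a c : R) :
    SolvesThreeTermRec α β (fun n => a * f n + c * g n) := fun n => by
  dsimp only
  rw [hf n, hg n]
  ring

theorem SolvesThreeTermRec.eq_of_eq_of_eq (hf : SolvesThreeTermRec α β f)
    (hg : SolvesThreeTermRec α β g) (h0 : f 0 = g 0) (h1 : f 1 = g 1) : f = g := by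
  funext n
  induction n using Nat.twoStepInduction with
  | zero => exact h0
  | one => exact h1
  | more n ih₀ ih₁ => rw [hf n, hg n, ih₀, ih₁]

end ThreeTermRec

theorem qPochC_succ (t a : ℂ) (n : ℕ) : qPochC t a (n + 1) = qPochC t a n * (1 - a * t ^ n) :=
  Finset.prod_range_succ _ n

theorem one_sub_mul_pow_ne_zero {t a : ℂ} (ht : ‖t‖ ≤ 1) (ha : ‖a‖ < 1) (i : ℕ) :
    1 - a * t ^ i ≠ 0 := by
  rw [sub_ne_zero]
  intro h
  have : ‖a * t ^ i‖ < 1 := by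
    rw [norm_mul, norm_pow]
    exact (mul_le_of_le_one_right (norm_nonneg a) (pow_le_one₀ (norm_nonneg t) ht)).trans_lt ha
  rw [← h, norm_one] at this
  exact this.false

theorem qPochC_ne_zero {t a : ℂ} (ht : ‖t‖ ≤ 1) (ha : ‖a‖ < 1) (n : ℕ) : qPochC t a n ≠ 0 :=
  Finset.prod_ne_zero_iff.mpr fun i _ => one_sub_mul_pow_ne_zero ht ha i

noncomputable def jCoeff (q ν : ℝ) (n : ℕ) : ℂ :=
  (-1) ^ n * (q : ℂ) ^ (n * (n + 1)) /
    (qPochC ((q : ℂ) ^ 2) ((q : ℂ) ^ 2) n * qPochC ((q : ℂ) ^ 2) (((q ^ (2 * ν + 2) : ℝ) : ℂ)) n)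

theorem jC_eq_tsum (q ν : ℝ) (x : ℂ) : jC q ν x = ∑' n, jCoeff q ν n * x ^ (2 * n) :=
  tsum_congr fun n => by rw [jCoeff]; ring

section JacksonSeries

variable {q ν : ℝ}

theorem norm_ofReal_sq_lt_one (hq0 : 0 < q) (hq1 : q < 1) : ‖(q : ℂ) ^ 2‖ < 1 := by
  rw [norm_pow, Complex.norm_real, Real.norm_eq_abs, abs_of_pos hq0]
  nlinarith

theorem norm_ofReal_rpow_lt_one (hq0 : 0 < q) (hq1 : q < 1) {e : ℝ} (he : 0 < e) :
    ‖((q ^ e : ℝ) : ℂ)‖ < 1 := by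
  rw [Complex.norm_real, Real.norm_eq_abs, abs_of_pos (Real.rpow_pos_of_pos hq0 e)]
  exact Real.rpow_lt_one hq0.le hq1 he

theorem ofReal_rpow_two_mul_add_two (hq0 : 0 < q) :
    ((q ^ (2 * ν + 2) : ℝ) : ℂ) = ((q ^ (2 * ν) : ℝ) : ℂ) * (q : ℂ) ^ 2 := by
  rw [Real.rpow_add hq0, Real.rpow_two]
  push_cast
  ring

theorem jCoeff_succ_denom_ne_zero (hq0 : 0 < q) (hq1 : q < 1) (hν : -1 < ν) (n : ℕ) :
    (1 - ((q : ℂ) ^ 2) ^ (n + 1)) * (1 - ((q ^ (2 * ν) : ℝ) : ℂ) * ((q : ℂ) ^ 2) ^ (n + 1)) ≠ 0 :=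
    by
  have ht := norm_ofReal_sq_lt_one hq0 hq1
  have f₁ := one_sub_mul_pow_ne_zero ht.le ht n
  have f₂ := one_sub_mul_pow_ne_zero ht.le
    (norm_ofReal_rpow_lt_one hq0 hq1 (by linarith : 0 < 2 * ν + 2)) n
  rw [ofReal_rpow_two_mul_add_two hq0, mul_assoc] at f₂
  rw [← pow_succ'] at f₁ f₂
  exact mul_ne_zero f₁ f₂

theorem jCoeff_succ (hq0 : 0 < q) (hq1 : q < 1) (hν : -1 < ν) (n : ℕ) :
    jCoeff q ν (n + 1) = -((q : ℂ) ^ 2) ^ (n + 1) /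
      ((1 - ((q : ℂ) ^ 2) ^ (n + 1)) * (1 - ((q ^ (2 * ν) : ℝ) : ℂ) * ((q : ℂ) ^ 2) ^ (n + 1)))
        * jCoeff q ν n := by
  have ht := norm_ofReal_sq_lt_one hq0 hq1
  have h₁ := qPochC_ne_zero ht.le ht n
  have h₂ := qPochC_ne_zero ht.le
    (norm_ofReal_rpow_lt_one hq0 hq1 (by linarith : 0 < 2 * ν + 2)) n
  have hf := jCoeff_succ_denom_ne_zero hq0 hq1 hν n
  rw [ofReal_rpow_two_mul_add_two hq0] at h₂
  rw [jCoeff, jCoeff, qPochC_succ, qPochC_succ, ofReal_rpow_two_mul_add_two hq0, mul_assoc,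
    ← pow_succ', show (n + 1) * (n + 1 + 1) = n * (n + 1) + 2 * (n + 1) by ring, pow_add, pow_mul]
  field_simp
  ring

theorem summable_jCoeff_mul_pow (hq0 : 0 < q) (hq1 : q < 1) (hν : -1 < ν) (x : ℂ) :
    Summable fun n => jCoeff q ν n * x ^ (2 * n) := by
  set t : ℂ := (q : ℂ) ^ 2
  set s : ℂ := ((q ^ (2 * ν) : ℝ) : ℂ)
  refine summable_of_ratio_tendsto_zero
    (r := fun n => -t ^ (n + 1) / ((1 - t ^ (n + 1)) * (1 - s * t ^ (n + 1))) * x ^ 2)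
    (fun n => by rw [jCoeff_succ hq0 hq1 hν]; ring) ?_
  have ht : Tendsto (fun n => t ^ (n + 1)) atTop (𝓝 0) :=
    (tendsto_pow_atTop_nhds_zero_of_norm_lt_one (norm_ofReal_sq_lt_one hq0 hq1)).comp
      (tendsto_add_atTop_nat 1)
  have hφ : ContinuousAt (fun u => -u / ((1 - u) * (1 - s * u)) * x ^ 2) 0 := by
    fun_prop (disch := simp)
  simpa [Function.comp_def] using hφ.tendsto.comp ht

theorem jCoeff_succ_mul_dilations (hq0 : 0 < q) (hq1 : q < 1) (hν : -1 < ν) (x : ℂ) (n : ℕ) :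
    jCoeff q ν (n + 1) * (((q : ℂ)⁻¹ * x) ^ (2 * (n + 1))
      + ((q ^ (2 * ν) : ℝ) : ℂ) * ((q : ℂ) * x) ^ (2 * (n + 1))
      - (1 + ((q ^ (2 * ν) : ℝ) : ℂ)) * x ^ (2 * (n + 1))) =
        -x ^ 2 * (jCoeff q ν n * x ^ (2 * n)) := by
  have hD := jCoeff_succ_denom_ne_zero hq0 hq1 hν n
  have hu : ((q : ℂ) ^ 2) ^ (n + 1) ≠ 0 :=
    pow_ne_zero _ (by exact_mod_cast (pow_pos hq0 2).ne')
  rw [jCoeff_succ hq0 hq1 hν, mul_pow, mul_pow, inv_pow, pow_mul]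
  generalize ((q : ℂ) ^ 2) ^ (n + 1) = u at *
  generalize ((q ^ (2 * ν) : ℝ) : ℂ) = s at *
  have key : u⁻¹ + s * u - (1 + s) = (1 - u) * (1 - s * u) / u := by field_simp; ring
  calc _ = -u / ((1 - u) * (1 - s * u)) * ((1 - u) * (1 - s * u) / u)
        * (jCoeff q ν n * x ^ (2 * (n + 1))) := by rw [← key]; ring
    _ = _ := by rw [div_mul_div_cancel₀ hD, neg_div, div_self hu]; ring

theorem jC_inv_mul (hq0 : 0 < q) (hq1 : q < 1) (hν : -1 < ν) (x : ℂ) :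
    jC q ν ((q : ℂ)⁻¹ * x) = (1 + ((q ^ (2 * ν) : ℝ) : ℂ)) * jC q ν x
      - ((q ^ (2 * ν) : ℝ) : ℂ) * jC q ν ((q : ℂ) * x) - x ^ 2 * jC q ν x := by
  set s : ℂ := ((q ^ (2 * ν) : ℝ) : ℂ)
  set T : ℂ → ℕ → ℂ := fun y n => jCoeff q ν n * y ^ (2 * n)
  have hT (y : ℂ) : Summable (T y) := summable_jCoeff_mul_pow hq0 hq1 hν y
  set D : ℕ → ℂ := fun n => T ((q : ℂ)⁻¹ * x) n + s * T ((q : ℂ) * x) n - (1 + s) * T x n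
  have hD : Summable D := ((hT _).add ((hT _).mul_left s)).sub ((hT x).mul_left (1 + s))
  have hD_tsum : ∑' n, D n =
      jC q ν ((q : ℂ)⁻¹ * x) + s * jC q ν ((q : ℂ) * x) - (1 + s) * jC q ν x := by
    simp only [jC_eq_tsum, D, ← tsum_mul_left]
    rw [((hT _).add ((hT _).mul_left s)).tsum_sub ((hT x).mul_left (1 + s)),
      (hT _).tsum_add ((hT _).mul_left s)]
  have hD_zero : D 0 = 0 := by simp only [D, T]; ring
  have hD_succ (n : ℕ) : D (n + 1) = -x ^ 2 * T x n := by
    rw [← jCoeff_succ_mul_dilations hq0 hq1 hν]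
    ring
  have := hD.tsum_eq_zero_add
  rw [hD_zero, zero_add, funext hD_succ, tsum_mul_left, hD_tsum, ← jC_eq_tsum] at this
  linear_combination this

end JacksonSeries

section Lommel

variable {q ν : ℝ}

theorem ofReal_rpow_two_mul_add (hq0 : 0 < q) (m : ℕ) (c : ℝ) :
    ((q ^ (2 * (m : ℝ) + c) : ℝ) : ℂ) = (q : ℂ) ^ (2 * m) * ((q ^ c : ℝ) : ℂ) := by
  rw [Real.rpow_add hq0, show 2 * (m : ℝ) = ((2 * m : ℕ) : ℝ) by push_cast; ring, Real.rpow_natCast]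
  push_cast
  ring

theorem ofReal_rpow_two_mul (m : ℕ) : ((q ^ (2 * (m : ℝ)) : ℝ) : ℂ) = (q : ℂ) ^ (2 * m) := by
  rw [show 2 * (m : ℝ) = ((2 * m : ℕ) : ℝ) by push_cast; ring, Real.rpow_natCast]
  push_cast
  ring

theorem ofReal_rpow_nat_mul (hq0 : 0 < q) (m : ℕ) (c : ℝ) :
    ((q ^ ((m : ℝ) * c) : ℝ) : ℂ) = ((q ^ c : ℝ) : ℂ) ^ m := by
  rw [mul_comm, Real.rpow_mul hq0.le, Real.rpow_natCast]
  push_cast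
  ring

theorem ofReal_rpow_add_one_mul_sub_one (hq0 : 0 < q) :
    ((q ^ (ν + 1) : ℝ) : ℂ) * ((q ^ (ν - 1) : ℝ) : ℂ) = ((q ^ (2 * ν) : ℝ) : ℂ) := by
  rw [← Complex.ofReal_mul, ← Real.rpow_add hq0]
  ring_nf

def IsLommelRec (q ν : ℝ) (μ : ℂ) (y : ℤ → ℂ) : Prop :=
  ∀ n : ℕ, ((q ^ (2 * (n : ℝ) + ν + 1) : ℝ) : ℂ) * y ((n : ℤ) + 1)
    - ((q ^ (2 * (n : ℝ)) : ℝ) : ℂ) * (1 + ((q ^ (2 * ν) : ℝ) : ℂ)) * y (n : ℤ)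
    + ((q ^ (2 * (n : ℝ) + ν - 1) : ℝ) : ℂ) * y ((n : ℤ) - 1) = μ * y (n : ℤ)

theorem IsLommelRec.pow_mul_eq {μ : ℂ} {y : ℤ → ℂ} (hy : IsLommelRec q ν μ y) (hq0 : 0 < q)
    (n : ℕ) :
    (q : ℂ) ^ (2 * n) * (((q ^ (ν + 1) : ℝ) : ℂ) * y ((n : ℤ) + 1)
      - (1 + ((q ^ (2 * ν) : ℝ) : ℂ)) * y n + ((q ^ (ν - 1) : ℝ) : ℂ) * y ((n : ℤ) - 1)) =
        μ * y n := by
  have h := hy n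
  rw [add_assoc, add_sub_assoc, ofReal_rpow_two_mul_add hq0, ofReal_rpow_two_mul_add hq0,
    ofReal_rpow_two_mul] at h
  linear_combination h

theorem IsLommelRec.solvesThreeTermRec {μ : ℂ} {y : ℤ → ℂ} (hy : IsLommelRec q ν μ y)
    (hq0 : 0 < q) :
    SolvesThreeTermRec (fun n => 1 + ((q ^ (2 * ν) : ℝ) : ℂ) + μ / (q : ℂ) ^ (2 * (n + 1)))
      (fun _ => -((q ^ (2 * ν) : ℝ) : ℂ)) (fun n => ((q ^ (ν + 1) : ℝ) : ℂ) ^ n * y n) := by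
  intro n
  have hq : (q : ℂ) ^ (2 * (n + 1)) ≠ 0 := pow_ne_zero _ (by exact_mod_cast hq0.ne')
  have h := hy.pow_mul_eq hq0 (n + 1)
  push_cast at h ⊢
  rw [show (n : ℤ) + 1 + 1 = n + 2 by ring, add_sub_cancel_right] at h
  have h' : μ / (q : ℂ) ^ (2 * (n + 1)) * y (n + 1) = ((q ^ (ν + 1) : ℝ) : ℂ) * y (n + 2)
      - (1 + ((q ^ (2 * ν) : ℝ) : ℂ)) * y (n + 1) + ((q ^ (ν - 1) : ℝ) : ℂ) * y n := by
    rw [div_mul_eq_mul_div, ← h, mul_div_cancel_left₀ _ hq]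
  linear_combination -((q ^ (ν + 1) : ℝ) : ℂ) ^ (n + 1) * h'
    - ((q ^ (ν + 1) : ℝ) : ℂ) ^ n * y n * ofReal_rpow_add_one_mul_sub_one hq0

end Lommel

theorem jC_zpow_neg_mul_solvesThreeTermRec {q ν : ℝ} (hq0 : 0 < q) (hq1 : q < 1) (hν : -1 < ν)
    (lam : ℂ) :
    SolvesThreeTermRec (fun n => 1 + ((q ^ (2 * ν) : ℝ) : ℂ) + -lam ^ 2 / (q : ℂ) ^ (2 * (n + 1)))
      (fun _ => -((q ^ (2 * ν) : ℝ) : ℂ)) (fun n => jC q ν ((q : ℂ) ^ (-(n : ℤ)) * lam)) := by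
  intro n
  have hq : (q : ℂ) ≠ 0 := by exact_mod_cast hq0.ne'
  have h := jC_inv_mul hq0 hq1 hν ((q : ℂ) ^ (-((n + 1 : ℕ) : ℤ)) * lam)
  have e₁ : (q : ℂ)⁻¹ * ((q : ℂ) ^ (-((n + 1 : ℕ) : ℤ)) * lam) =
      (q : ℂ) ^ (-((n + 2 : ℕ) : ℤ)) * lam := by
    rw [← mul_assoc, ← zpow_neg_one, ← zpow_add₀ hq]
    push_cast
    ring_nf
  have e₂ : (q : ℂ) * ((q : ℂ) ^ (-((n + 1 : ℕ) : ℤ)) * lam) = (q : ℂ) ^ (-(n : ℤ)) * lam := by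
    rw [← mul_assoc, ← zpow_one_add₀ hq]
    push_cast
    ring_nf
  have e₃ : ((q : ℂ) ^ (-((n + 1 : ℕ) : ℤ)) * lam) ^ 2 = lam ^ 2 / (q : ℂ) ^ (2 * (n + 1)) := by
    rw [zpow_neg, zpow_natCast, mul_pow, inv_pow, ← pow_mul, mul_comm (n + 1)]
    ring
  rw [e₁, e₂, e₃] at h
  dsimp only
  rw [h]
  ring

theorem stmt10_general (q ν : ℝ) (hq0 : 0 < q) (hq1 : q < 1) (hν : -1 < ν)
    (P Q : ℤ → ℂ → ℂ)
    (hPinit : ∀ μ : ℂ, P (-1) μ = 0 ∧ P 0 μ = 1)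
    (hQinit : ∀ μ : ℂ, Q (-1) μ = -1 ∧ Q 0 μ = 0)
    (hPrec : ∀ (n : ℕ) (μ : ℂ),
        ((q ^ (2 * (n : ℝ) + ν + 1) : ℝ) : ℂ) * P ((n : ℤ) + 1) μ
        - ((q ^ (2 * (n : ℝ)) : ℝ) : ℂ) * (1 + ((q ^ (2 * ν) : ℝ) : ℂ)) * P (n : ℤ) μ
        + ((q ^ (2 * (n : ℝ) + ν - 1) : ℝ) : ℂ) * P ((n : ℤ) - 1) μ = μ * P (n : ℤ) μ)
    (hQrec : ∀ (n : ℕ) (μ : ℂ),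
        ((q ^ (2 * (n : ℝ) + ν + 1) : ℝ) : ℂ) * Q ((n : ℤ) + 1) μ
        - ((q ^ (2 * (n : ℝ)) : ℝ) : ℂ) * (1 + ((q ^ (2 * ν) : ℝ) : ℂ)) * Q (n : ℤ) μ
        + ((q ^ (2 * (n : ℝ) + ν - 1) : ℝ) : ℂ) * Q ((n : ℤ) - 1) μ = μ * Q (n : ℤ) μ) :
    ∀ (n : ℕ) (lam : ℂ),
      jC q ν ((q : ℂ) ^ (-(n : ℤ)) * lam) =
        ((q ^ ((n : ℝ) * (ν + 1)) : ℝ) : ℂ) *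
          (jC q ν lam * P (n : ℤ) (-lam ^ 2)
            - ((q ^ (ν + 1) : ℝ) : ℂ) * jC q ν ((q : ℂ) * lam) * Q (n : ℤ) (-lam ^ 2)) := by
  intro n lam
  set b : ℂ := ((q ^ (ν + 1) : ℝ) : ℂ)
  have hP : IsLommelRec q ν (-lam ^ 2) (P · (-lam ^ 2)) := fun n => hPrec n _
  have hQ : IsLommelRec q ν (-lam ^ 2) (Q · (-lam ^ 2)) := fun n => hQrec n _
  obtain ⟨hP_neg_one, hP_zero⟩ := hPinit (-lam ^ 2)
  obtain ⟨hQ_neg_one, hQ_zero⟩ := hQinit (-lam ^ 2)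
  have hP_one : b * P 1 (-lam ^ 2) = 1 + ((q ^ (2 * ν) : ℝ) : ℂ) - lam ^ 2 := by
    have h := hP.pow_mul_eq hq0 0
    simp only [Nat.cast_zero, zero_add, zero_sub, mul_zero, pow_zero, one_mul, hP_neg_one,
      hP_zero] at h
    linear_combination h
  have hQ_one : b * Q 1 (-lam ^ 2) = ((q ^ (ν - 1) : ℝ) : ℂ) := by
    have h := hQ.pow_mul_eq hq0 0
    simp only [Nat.cast_zero, zero_add, zero_sub, mul_zero, pow_zero, one_mul, hQ_neg_one,
      hQ_zero] at h
    linear_combination h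
  have key := (jC_zpow_neg_mul_solvesThreeTermRec hq0 hq1 hν lam).eq_of_eq_of_eq
    ((hP.solvesThreeTermRec hq0).linearCombination (hQ.solvesThreeTermRec hq0)
      (jC q ν lam) (-(b * jC q ν ((q : ℂ) * lam))))
    (by simp [hP_zero, hQ_zero])
    (by
      simp only [Nat.cast_one, zpow_neg_one, pow_one]
      linear_combination jC_inv_mul hq0 hq1 hν lam - jC q ν lam * hP_one
        + b * jC q ν ((q : ℂ) * lam) * hQ_one
        + jC q ν ((q : ℂ) * lam) * ofReal_rpow_add_one_mul_sub_one hq0)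
  rw [congrFun key n, ofReal_rpow_nat_mul hq0]
  ring

theorem stmt10 (q ν : ℝ) (hq0 : 0 < q) (hq1 : q < 1) (hν : -1 < ν)
    (hνnotint : ∀ k : ℤ, ν ≠ (k : ℝ))
    (P Q : ℤ → ℂ → ℂ)
    (hPinit : ∀ μ : ℂ, P (-1) μ = 0 ∧ P 0 μ = 1)
    (hQinit : ∀ μ : ℂ, Q (-1) μ = -1 ∧ Q 0 μ = 0)
    (hPrec : ∀ (n : ℕ) (μ : ℂ),
        ((q ^ (2 * (n : ℝ) + ν + 1) : ℝ) : ℂ) * P ((n : ℤ) + 1) μ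
        - ((q ^ (2 * (n : ℝ)) : ℝ) : ℂ) * (1 + ((q ^ (2 * ν) : ℝ) : ℂ)) * P (n : ℤ) μ
        + ((q ^ (2 * (n : ℝ) + ν - 1) : ℝ) : ℂ) * P ((n : ℤ) - 1) μ = μ * P (n : ℤ) μ)
    (hQrec : ∀ (n : ℕ) (μ : ℂ),
        ((q ^ (2 * (n : ℝ) + ν + 1) : ℝ) : ℂ) * Q ((n : ℤ) + 1) μ
        - ((q ^ (2 * (n : ℝ)) : ℝ) : ℂ) * (1 + ((q ^ (2 * ν) : ℝ) : ℂ)) * Q (n : ℤ) μ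
        + ((q ^ (2 * (n : ℝ) + ν - 1) : ℝ) : ℂ) * Q ((n : ℤ) - 1) μ = μ * Q (n : ℤ) μ) :
    ∀ (n : ℕ) (lam : ℂ),
      jC q ν ((q : ℂ) ^ (-(n : ℤ)) * lam) =
        ((q ^ ((n : ℝ) * (ν + 1)) : ℝ) : ℂ) *
          (jC q ν lam * P (n : ℤ) (-lam ^ 2)
            - ((q ^ (ν + 1) : ℝ) : ℂ) * jC q ν ((q : ℂ) * lam) * Q (n : ℤ) (-lam ^ 2)) :=
  stmt10_general q ν hq0 hq1 hν P Q hPinit hQinit hPrec hQrec
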